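/- arXiv:2004.12258 — 5 statements merged into one kernel-verified Lean document; each statement's English description precedes it below -/
import Mathlib

section
/- Let H be a 3-regular graph on 2n vertices and R(H) the graph obtained by subdividing each edge with 2t intermediate vertices. Then H has an independent set of size k if and only if R(H) has an independent set of size k + 3nt. -/
open scoped Classical

/-- The graph obtained from `H` by replacing every edge `(u,v)` by a path with
`2*t` intermediate vertices. -/
def Subdiv {V : Type*} (H : SimpleGraph V) (t : ℕ) :
    SimpleGraph (V ⊕ (H.Dart × Fin t)) :=
  SimpleGraph.fromRel (fun a b =>
    match a, b with
    | Sum.inl u, Sum.inr (d, i) => u = d.fst ∧ i.val = 0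
    | Sum.inr (d, i), Sum.inr (e, j) =>
        (d = e ∧ j.val = i.val + 1) ∨ (e = d.symm ∧ i.val = t - 1 ∧ j.val = t - 1)
    | _, _ => False)

/-!
In `Subdiv H t` the edge `uv` becomes the path `u, (d,0), …, (d,t-1), (d',t-1), …, (d',0), v`,
where `d` is the dart `(u,v)` and `d'` its reverse. Given an independent set `s` of `H`, pick for
every edge an end outside `s` and take every second internal vertex of its path, starting next to
that end: this adds `t` vertices per edge. Conversely, an independent set containing `c` vertices
of a path `p₀, …, p_m` satisfies `2c ≤ m + [p₀ ∈ S] + [p_m ∈ S]`; applied to the two halves of a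
subdivided edge, this shows that an independent set contains at most `t` internal vertices of the
path, and at most `t - 1` if it also contains `u` and `v`. Hence its trace on `V` exceeds `k` by at
least the number of edges it spans, and removing one end of each of these edges leaves an
independent set of `H` with at least `k` vertices.
-/

open Finset SimpleGraph Sum

namespace SimpleGraph

variable {V : Type*} {G : SimpleGraph V}

theorem isIndepSet_coe_iff {s : Finset V} :
    G.IsIndepSet (s : Set V) ↔ ∀ u ∈ s, ∀ v ∈ s, ¬ G.Adj u v :=
  ⟨fun h _ hu _ hv hadj => h hu hv hadj.ne hadj, fun h _ hu _ hv _ => h _ hu _ hv⟩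

theorem exists_dart_orientation (G : SimpleGraph V) :
    ∃ o : G.Dart → Prop, ∀ d, o d.symm ↔ ¬ o d := by
  refine ⟨fun d => WellOrderingRel d.fst d.snd, fun d => ?_⟩
  simp only [Dart.symm_toProd, Prod.fst_swap, Prod.snd_swap]
  rcases trichotomous_of WellOrderingRel d.fst d.snd with h | h | h
  · exact iff_of_false (asymm h) (not_not.2 h)
  · exact absurd h d.adj.ne
  · exact iff_of_true h (asymm h)

theorem IsIndepSet.exists_dart_orientation {s : Set V} (hs : G.IsIndepSet s) :
    ∃ q : G.Dart → Prop, (∀ d, q d.symm ↔ ¬ q d) ∧ ∀ d, d.fst ∈ s → ¬ q d := by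
  obtain ⟨o, ho⟩ := G.exists_dart_orientation
  have hnot (d : G.Dart) : ¬ (d.fst ∈ s ∧ d.snd ∈ s) := fun h => hs h.1 h.2 d.adj.ne d.adj
  refine ⟨fun d => d.snd ∈ s ∨ d.fst ∉ s ∧ o d, fun d => ?_, fun d hd => ?_⟩
  · have := ho d
    have := hnot d
    simp only [Dart.symm_toProd, Prod.fst_swap, Prod.snd_swap]
    tauto
  · have := hnot d
    tauto

section Dart

variable [Fintype G.Dart]

theorem Dart.sum_symm {M : Type*} [AddCommMonoid M] (f : G.Dart → M) :
    ∑ d : G.Dart, f d.symm = ∑ d, f d :=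
  Equiv.sum_comp (Dart.symm_involutive.toPerm _) f

theorem Dart.two_mul_sum {R : Type*} [NonAssocSemiring R] (f : G.Dart → R) :
    2 * ∑ d : G.Dart, f d = ∑ d, (f d + f d.symm) := by
  rw [sum_add_distrib, Dart.sum_symm, two_mul]

theorem Dart.card_filter_symm (P : G.Dart → Prop) [DecidablePred P] :
    #{d : G.Dart | P d.symm} = #{d | P d} := by
  simp only [card_filter]
  exact Dart.sum_symm (fun d => if P d then 1 else 0)

end Dart

theorem exists_isIndepSet_subset_two_mul_card_le [Fintype V] [DecidableEq V]
    [DecidableRel G.Adj] (s₀ : Finset V) :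
    ∃ s ⊆ s₀, G.IsIndepSet s ∧
      2 * #s₀ ≤ 2 * #s + #{d : G.Dart | d.fst ∈ s₀ ∧ d.snd ∈ s₀} := by
  obtain ⟨o, ho⟩ := G.exists_dart_orientation
  set A : Finset G.Dart := {d | (d.fst ∈ s₀ ∧ d.snd ∈ s₀) ∧ o d}
  refine ⟨s₀ \ A.image (fun d => d.fst), sdiff_subset, ?_, ?_⟩
  · intro u hu v hv _ hadj
    simp only [coe_sdiff, Set.mem_sdiff, mem_coe, mem_image] at hu hv
    let d : G.Dart := ⟨(u, v), hadj⟩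
    by_cases hd : o d
    · exact hu.2 ⟨d, mem_filter.2 ⟨mem_univ _, ⟨hu.1, hv.1⟩, hd⟩, rfl⟩
    · exact hv.2 ⟨d.symm, mem_filter.2 ⟨mem_univ _, ⟨hv.1, hu.1⟩, (ho d).2 hd⟩, rfl⟩
  · have hA : #{d : G.Dart | d.fst ∈ s₀ ∧ d.snd ∈ s₀} = 2 * #A := by
      rw [← card_filter_add_card_filter_not (fun d => o d), filter_filter, filter_filter, two_mul,
        ← Dart.card_filter_symm (fun d => _ ∧ ¬ o d)]
      congr 2
      ext d
      simp only [A, mem_filter, mem_univ, true_and, Dart.symm_toProd, Prod.fst_swap,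
        Prod.snd_swap, ho, not_not]
      tauto
    have := le_card_sdiff (A.image fun d => d.fst) s₀
    have := card_image_le (s := A) (f := fun d => d.fst)
    omega

theorem IsIndepSet.ite_add_ite_le_one {s : Set V} (hs : G.IsIndepSet s) {a b : V}
    (hab : G.Adj a b) : (if a ∈ s then 1 else 0) + (if b ∈ s then 1 else 0) ≤ 1 := by
  split_ifs with ha hb <;> first | omega | exact absurd hab (hs ha hb hab.ne)

theorem IsIndepSet.two_mul_card_filter_le {s : Set V} (hs : G.IsIndepSet s) :
    ∀ {m : ℕ} (f : Fin (m + 1) → V), (∀ i : Fin m, G.Adj (f i.castSucc) (f i.succ)) →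
      2 * #{i | f i ∈ s} ≤
        m + (if f 0 ∈ s then 1 else 0) + (if f (Fin.last m) ∈ s then 1 else 0)
  | 0, f, _ => by
    rw [Fin.card_filter_univ_succ', show Fin.last 0 = 0 from rfl]
    split_ifs <;> simp
  | m + 1, f, hf => by
    have ih : 2 * #{i : Fin (m + 1) | f i.succ ∈ s} ≤
        m + (if f (Fin.succ 0) ∈ s then 1 else 0) + (if f (Fin.last (m + 1)) ∈ s then 1 else 0) :=
      hs.two_mul_card_filter_le (fun i => f i.succ) fun i => by
        rw [Fin.succ_castSucc]
        exact hf i.succ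
    have h01 : (if f 0 ∈ s then 1 else 0) + (if f (Fin.succ 0) ∈ s then 1 else 0) ≤ 1 :=
      hs.ite_add_ite_le_one (hf 0)
    rw [Fin.card_filter_univ_succ']
    omega

end SimpleGraph

theorem Finset.card_toRight_eq_sum_card_filter {α β γ : Type*} [DecidableEq α] [DecidableEq β]
    [DecidableEq γ] [Fintype β] [Fintype γ] (S : Finset (α ⊕ β × γ)) :
    #S.toRight = ∑ b, #{c | inr (b, c) ∈ S} := by
  have : S.toRight = univ.filter (inr · ∈ S) := by ext; simp
  rw [this, card_filter, Fintype.sum_prod_type]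
  simp only [← card_filter]

section Subdiv

variable {V : Type*} {H : SimpleGraph V}

theorem subdiv_not_adj_inl_inl {t : ℕ} (u v : V) : ¬ (Subdiv H t).Adj (inl u) (inl v) := by
  simp [Subdiv]

theorem subdiv_adj_inl_inr {t : ℕ} (u : V) (d : H.Dart) (i : Fin t) :
    (Subdiv H t).Adj (inl u) (inr (d, i)) ↔ u = d.fst ∧ i.val = 0 := by
  simp [Subdiv]

theorem subdiv_adj_inr_inr {t : ℕ} (d e : H.Dart) (i j : Fin t) :
    (Subdiv H t).Adj (inr (d, i)) (inr (e, j)) ↔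
      d = e ∧ (j.val = i.val + 1 ∨ i.val = j.val + 1) ∨
        e = d.symm ∧ i.val = t - 1 ∧ j.val = t - 1 := by
  simp only [Subdiv, fromRel_adj, ne_eq, inr.injEq, Prod.mk.injEq]
  have := d.symm_ne
  constructor
  · rintro ⟨-, h⟩
    grind [Dart.symm_symm]
  · intro h
    refine ⟨?_, ?_⟩
    · rintro ⟨rfl, rfl⟩
      grind
    · grind [Dart.symm_symm]

theorem subdiv_isIndepSet_disjSum [Fintype V] [DecidableRel H.Adj] {t : ℕ} {s : Finset V}
    {q : H.Dart → Prop} (hq_symm : ∀ d, q d.symm ↔ ¬ q d) (hq_fst : ∀ d, d.fst ∈ s → ¬ q d) :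
    (Subdiv H t).IsIndepSet (s.disjSum {x : H.Dart × Fin t | Even x.2.val ↔ q x.1}) := by
  rintro (u | ⟨d, i⟩) hx (v | ⟨e, j⟩) hy - hadj <;>
    simp only [mem_coe, inl_mem_disjSum, inr_mem_disjSum, mem_filter, mem_univ, true_and]
      at hx hy
  · exact subdiv_not_adj_inl_inl u v hadj
  · obtain ⟨rfl, hj⟩ := (subdiv_adj_inl_inr u e j).1 hadj
    exact hq_fst e hx (hy.1 (hj ▸ Even.zero))
  · obtain ⟨rfl, hi⟩ := (subdiv_adj_inl_inr v d i).1 hadj.symm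
    exact hq_fst d hy (hx.1 (hi ▸ Even.zero))
  · rcases (subdiv_adj_inr_inr d e i j).1 hadj with ⟨rfl, h | h⟩ | ⟨rfl, hi, hj⟩
    · rw [h, Nat.even_add_one] at hy
      tauto
    · rw [h, Nat.even_add_one] at hx
      tauto
    · rw [hj, ← hi, hq_symm] at hy
      tauto

theorem exists_subdiv_isIndepSet_card_eq [Fintype V] [DecidableEq V] [DecidableRel H.Adj]
    (t : ℕ) {s : Finset V} (hs : H.IsIndepSet s) :
    ∃ S : Finset (V ⊕ (H.Dart × Fin t)), (Subdiv H t).IsIndepSet S ∧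
      #S = #s + #H.edgeFinset * t := by
  obtain ⟨q, hq_symm, hq_fst⟩ := hs.exists_dart_orientation
  refine ⟨_, subdiv_isIndepSet_disjSum hq_symm hq_fst, ?_⟩
  have hpair (d : H.Dart) :
      #{i : Fin t | Even i.val ↔ q d} + #{i : Fin t | Even i.val ↔ q d.symm} = t := by
    have := card_filter_add_card_filter_not (s := univ) (fun i : Fin t => Even i.val ↔ q d)
    rw [card_univ, Fintype.card_fin] at this
    convert this using 3
    ext i
    simp only [mem_filter, mem_univ, true_and, hq_symm]
    tauto
  have hfib : 2 * #{x : H.Dart × Fin t | Even x.2.val ↔ q x.1} = Fintype.card H.Dart * t := by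
    rw [card_filter, Fintype.sum_prod_type]
    simp only [← card_filter]
    rw [Dart.two_mul_sum, sum_congr rfl fun d _ => hpair d, sum_const, card_univ, smul_eq_mul]
  rw [dart_card_eq_twice_card_edges] at hfib
  rw [card_disjSum]
  linarith

theorem subdiv_card_add_card_symm_le [Fintype V] [DecidableEq V] [DecidableRel H.Adj] {m : ℕ}
    {S : Finset (V ⊕ (H.Dart × Fin (m + 1)))} (hS : (Subdiv H (m + 1)).IsIndepSet S)
    (d : H.Dart) :
    #{i | inr (d, i) ∈ S} + #{i | inr (d.symm, i) ∈ S} +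
      (if inl d.fst ∈ S ∧ inl d.snd ∈ S then 1 else 0) ≤ m + 1 := by
  have half (e : H.Dart) := hS.two_mul_card_filter_le (fun i => inr (e, i)) fun i =>
    (subdiv_adj_inr_inr _ _ _ _).2 (Or.inl ⟨rfl, Or.inl rfl⟩)
  have hd := half d
  have hd' := half d.symm
  have h₁ := hS.ite_add_ite_le_one ((subdiv_adj_inl_inr d.fst d 0).2 ⟨rfl, rfl⟩)
  have h₂ := hS.ite_add_ite_le_one ((subdiv_adj_inr_inr d d.symm (Fin.last m) (Fin.last m)).2
    (Or.inr ⟨rfl, by simp, by simp⟩))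
  have h₃ := hS.ite_add_ite_le_one ((subdiv_adj_inl_inr d.snd d.symm 0).2 ⟨rfl, rfl⟩)
  simp only [mem_coe, ite_and] at hd hd' h₁ h₂ h₃ ⊢
  split_ifs at hd hd' h₁ h₂ h₃ ⊢ <;> omega

theorem exists_isIndepSet_card_le_of_subdiv [Fintype V] [DecidableEq V] [DecidableRel H.Adj]
    {t : ℕ} (ht : 0 < t) {S : Finset (V ⊕ (H.Dart × Fin t))}
    (hS : (Subdiv H t).IsIndepSet S) :
    ∃ s : Finset V, H.IsIndepSet s ∧ #S ≤ #s + #H.edgeFinset * t := by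
  obtain ⟨m, rfl⟩ : ∃ m, t = m + 1 := ⟨t - 1, by omega⟩
  obtain ⟨s, -, hs, hs_card⟩ := H.exists_isIndepSet_subset_two_mul_card_le S.toLeft
  refine ⟨s, hs, ?_⟩
  have hdarts : 2 * #S.toRight + #{d : H.Dart | d.fst ∈ S.toLeft ∧ d.snd ∈ S.toLeft} ≤
      Fintype.card H.Dart * (m + 1) := by
    rw [card_toRight_eq_sum_card_filter, Dart.two_mul_sum, card_filter, ← sum_add_distrib]
    calc _ ≤ ∑ _d : H.Dart, (m + 1) := sum_le_sum fun d _ => by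
            refine le_of_eq_of_le ?_ (subdiv_card_add_card_symm_le hS d)
            simp only [mem_toLeft]
      _ = Fintype.card H.Dart * (m + 1) := by rw [sum_const, card_univ, smul_eq_mul]
  rw [dart_card_eq_twice_card_edges, mul_assoc] at hdarts
  have := card_toLeft_add_card_toRight (u := S)
  omega

end Subdiv

theorem subdiv_indepSet_iff_general {V : Type*} [Fintype V] [DecidableEq V]
    (H : SimpleGraph V) [DecidableRel H.Adj] (n t k : ℕ) (ht : 0 < t)
    (hcard : Fintype.card V = 2 * n) (hreg : H.IsRegularOfDegree 3) :
    (∃ s : Finset V, s.card = k ∧ ∀ u ∈ s, ∀ v ∈ s, ¬ H.Adj u v) ↔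
    (∃ S : Finset (V ⊕ (H.Dart × Fin t)), S.card = k + 3 * n * t ∧
      ∀ u ∈ S, ∀ v ∈ S, ¬ (Subdiv H t).Adj u v) := by
  have hE : #H.edgeFinset = 3 * n := by
    have := H.sum_degrees_eq_twice_card_edges
    simp only [hreg.degree_eq, sum_const, card_univ, hcard, smul_eq_mul] at this
    omega
  simp only [← isIndepSet_coe_iff]
  constructor
  · rintro ⟨s, rfl, hs⟩
    obtain ⟨S, hS, hS_card⟩ := exists_subdiv_isIndepSet_card_eq t hs
    exact ⟨S, by rw [hS_card, hE], hS⟩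
  · rintro ⟨S, hS_card, hS⟩
    obtain ⟨s, hs, hs_card⟩ := exists_isIndepSet_card_le_of_subdiv ht hS
    rw [hS_card, hE] at hs_card
    obtain ⟨s', hs's, hs'_card⟩ := exists_subset_card_eq (show k ≤ #s by omega)
    exact ⟨s', hs'_card, hs.mono hs's⟩

/-- `H` 3-regular on `2n` vertices has an independent set of size `k` iff its
`2t`-subdivision has an independent set of size `k + 3nt`. -/
theorem subdiv_indepSet_iff {V : Type*} [Fintype V] [DecidableEq V]
    (H : SimpleGraph V) [DecidableRel H.Adj] (n t k : ℕ) (hn : 0 < n) (ht : 0 < t)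
    (hcard : Fintype.card V = 2 * n) (hreg : H.IsRegularOfDegree 3) :
    (∃ s : Finset V, s.card = k ∧ ∀ u ∈ s, ∀ v ∈ s, ¬ H.Adj u v) ↔
    (∃ S : Finset (V ⊕ (H.Dart × Fin t)), S.card = k + 3 * n * t ∧
      ∀ u ∈ S, ∀ v ∈ S, ¬ (Subdiv H t).Adj u v) :=
  subdiv_indepSet_iff_general H n t k ht hcard hreg
end

section
/- Let H be a 3-regular graph on 2n vertices and R(H) obtained by subdividing each edge with 2t intermediate vertices. Then R(H) is balanced: every induced subgraph of R(H) has average degree at most 2 + 1/(3t+1). -/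
open scoped Classical

/-!
Let `S` contain `a` branch vertices and `b` subdivision vertices. Read every edge `uv` of `H` as
the two darts `(u,v)` and `(v,u)`; each dart traverses the whole path of `uv` (`2t + 1` edges), so
every edge of the induced subgraph is counted twice. On one path, the edges inside `S` number at
most the internal vertices in `S`, plus one if the whole path, endpoints included, lies in `S`
(a full dart). Hence `2 e(S) ≤ 2b + f`, with `f` the number of full darts. A full dart puts its
`t` own subdivision vertices into `S`, so `t f ≤ b`, and starts at a branch vertex of `S`, so
`f ≤ 3a`. Then `(3t + 1) f ≤ (6t + 3) a + b`, which rearranges to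
`2 e(S) ≤ (2 + 1/(3t + 1)) (a + b)`.
-/

namespace Finset

theorem card_filter_range_and_succ_le (Q : ℕ → Prop) [DecidablePred Q] (m : ℕ) :
    #{j ∈ range (m + 1) | Q j ∧ Q (j + 1)} ≤
      #{j ∈ range m | Q (j + 1)} + if ∀ j ≤ m + 1, Q j then 1 else 0 := by
  split_ifs with hall
  · calc #{j ∈ range (m + 1) | Q j ∧ Q (j + 1)} ≤ #(range (m + 1)) := card_filter_le _ _
      _ = #{j ∈ range m | Q (j + 1)} + 1 := by
        rw [filter_true_of_mem fun j hj => hall _ (by rw [mem_range] at hj; omega), card_range,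
          card_range]
  · push Not at hall
    obtain ⟨g, hg, hQg⟩ := hall
    -- `g ∉ Q` cuts the path: send a pair below `g` to its upper end, a pair above `g` to its
    -- lower end
    refine card_le_card_of_injOn (fun j => if j < g then j else j - 1) ?_ ?_ |>.trans le_self_add
    · intro j hj
      simp only [mem_coe, mem_filter, mem_range] at hj ⊢
      have : j ≠ g := fun h => hQg (h ▸ hj.2.1)
      have : j + 1 ≠ g := fun h => hQg (h ▸ hj.2.2)
      split_ifs
      · exact ⟨by omega, hj.2.2⟩
      · exact ⟨by omega, by rw [Nat.sub_add_cancel (by omega)]; exact hj.2.1⟩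
    · intro j₁ h₁ j₂ h₂ heq
      simp only [mem_coe, mem_filter, mem_range] at h₁ h₂
      have : j₁ ≠ g := fun h => hQg (h ▸ h₁.2.1)
      have : j₂ ≠ g := fun h => hQg (h ▸ h₂.2.1)
      simp only at heq
      split_ifs at heq <;> omega

end Finset

namespace Subdiv

open Finset

variable {V : Type*} {H : SimpleGraph V} {t : ℕ}

-- Position `j` on the path from `d.fst` to `d.snd`: positions `1, …, t` carry the labels of `d`,
-- positions `t + 1, …, 2t` those of `d.symm` in reverse order.
variable (H t) in
def pathVertex (d : H.Dart) (j : ℕ) : V ⊕ (H.Dart × Fin t) :=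
  if _ : j = 0 then .inl d.fst
  else if _ : j ≤ t then .inr (d, ⟨j - 1, by omega⟩)
  else if _ : j ≤ 2 * t then .inr (d.symm, ⟨2 * t - j, by omega⟩)
  else .inl d.snd

@[simp]
lemma pathVertex_zero (d : H.Dart) : pathVertex H t d 0 = .inl d.fst := by
  simp [pathVertex]

@[simp]
lemma pathVertex_succ (d : H.Dart) (i : Fin t) : pathVertex H t d (i + 1) = .inr (d, i) := by
  simp [pathVertex, Nat.succ_le_of_lt i.isLt]

lemma pathVertex_symm (d : H.Dart) {k : ℕ} (hk : k ≤ 2 * t + 1) :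
    pathVertex H t d.symm k = pathVertex H t d (2 * t + 1 - k) := by
  unfold pathVertex
  split_ifs <;> first | omega | simp <;> omega

lemma exists_pathVertex_of_adj {a b : V ⊕ (H.Dart × Fin t)} (h : (Subdiv H t).Adj a b) :
    ∃ d, ∃ j ≤ 2 * t, s(a, b) = s(pathVertex H t d j, pathVertex H t d (j + 1)) := by
  have branch (d : H.Dart) (i : Fin t) (hi : i.val = 0) :
      s(.inl d.fst, .inr (d, i)) = s(pathVertex H t d 0, pathVertex H t d (0 + 1)) := by
    rw [pathVertex_zero, show 0 + 1 = i.val + 1 by omega, pathVertex_succ]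
  have step (d : H.Dart) (i k : Fin t) (hk : k.val = i.val + 1) :
      s(.inr (d, i), .inr (d, k)) =
        s(pathVertex H t d (i + 1), pathVertex H t d (i + 1 + 1)) := by
    rw [pathVertex_succ, ← hk, pathVertex_succ]
  have middle (d : H.Dart) (i k : Fin t) (hi : i.val = t - 1) (hk : k.val = t - 1) :
      s(.inr (d, i), .inr (d.symm, k)) =
        s(pathVertex H t d (i + 1), pathVertex H t d (i + 1 + 1)) := by
    have hlast : pathVertex H t d (i + 1 + 1) = pathVertex H t d.symm (k + 1) := by
      rw [pathVertex_symm d (by omega)]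
      congr 1
      omega
    rw [hlast, pathVertex_succ, pathVertex_succ]
  obtain ⟨-, h⟩ := (SimpleGraph.fromRel_adj _ _ _).1 h
  rcases a with u | ⟨d, i⟩ <;> rcases b with v | ⟨e, k⟩ <;>
    simp only [or_false, false_or, or_self] at h
  · obtain ⟨rfl, hk⟩ := h
    exact ⟨e, 0, by omega, branch e k hk⟩
  · obtain ⟨rfl, hi⟩ := h
    exact ⟨d, 0, by omega, Sym2.eq_swap.trans (branch d i hi)⟩
  · obtain (⟨rfl, hk⟩ | ⟨rfl, hi, hk⟩) | (⟨rfl, hi⟩ | ⟨rfl, hk, hi⟩) := h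
    · exact ⟨d, i + 1, by omega, step d i k hk⟩
    · exact ⟨d, i + 1, by omega, middle d i k hi hk⟩
    · exact ⟨e, k + 1, by omega, Sym2.eq_swap.trans (step e k i hi)⟩
    · exact ⟨e, k + 1, by omega, Sym2.eq_swap.trans (middle e k i hk hi)⟩

variable [DecidableEq V] (S : Finset (V ⊕ (H.Dart × Fin t)))

lemma card_filter_range_two_mul_pathVertex (d : H.Dart) :
    #{j ∈ range (2 * t) | pathVertex H t d (j + 1) ∈ S} =
      #{j ∈ range t | pathVertex H t d (j + 1) ∈ S} +
        #{j ∈ range t | pathVertex H t d.symm (j + 1) ∈ S} := by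
  simp only [card_filter]
  rw [two_mul, sum_range_add,
    ← sum_range_reflect (fun j => if pathVertex H t d.symm (j + 1) ∈ S then 1 else 0) t]
  refine congrArg _ (sum_congr rfl fun j hj => ?_)
  rw [mem_range] at hj
  rw [pathVertex_symm d (by omega), show 2 * t + 1 - (t - 1 - j + 1) = t + j + 1 by omega]

variable [Fintype V] [DecidableRel H.Adj]

theorem two_mul_card_induced_edges_le_sum :
    2 * #{e ∈ (Subdiv H t).edgeFinset | ∀ v ∈ e, v ∈ S} ≤
      ∑ d, #{j ∈ range (2 * t + 1) |
        pathVertex H t d j ∈ S ∧ pathVertex H t d (j + 1) ∈ S} := by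
  set P : Finset (H.Dart × ℕ) := {x ∈ univ ×ˢ range (2 * t + 1) |
    pathVertex H t x.1 x.2 ∈ S ∧ pathVertex H t x.1 (x.2 + 1) ∈ S}
  set r : Sym2 (V ⊕ (H.Dart × Fin t)) → H.Dart × ℕ → Prop :=
    fun e x => s(pathVertex H t x.1 x.2, pathVertex H t x.1 (x.2 + 1)) = e
  have hP : #P = ∑ d, #{j ∈ range (2 * t + 1) |
      pathVertex H t d j ∈ S ∧ pathVertex H t d (j + 1) ∈ S} := by
    simp only [P, card_filter, sum_product]
  rw [← hP, mul_comm, ← mul_one #P]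
  -- each induced edge is traversed once by the path of each of its two darts
  refine card_mul_le_card_mul r (fun e he => ?_) fun x _ =>
    card_le_one.2 fun e₁ h₁ e₂ h₂ =>
      ((mem_bipartiteBelow r).1 h₁).2.symm.trans ((mem_bipartiteBelow r).1 h₂).2
  rw [mem_filter, SimpleGraph.mem_edgeFinset] at he
  obtain ⟨he, hS⟩ := he
  induction e using Sym2.ind with | _ a b => ?_
  obtain ⟨d, j, hj, hab⟩ := exists_pathVertex_of_adj he
  rw [hab] at hS ⊢
  have h₁ : pathVertex H t d.symm (2 * t - j) = pathVertex H t d (j + 1) := by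
    rw [pathVertex_symm d (by omega)]
    congr 1
    omega
  have h₂ : pathVertex H t d.symm (2 * t - j + 1) = pathVertex H t d j := by
    rw [pathVertex_symm d (by omega)]
    congr 1
    omega
  have hmem : {(d, j), (d.symm, 2 * t - j)} ⊆ P.bipartiteAbove r
      s(pathVertex H t d j, pathVertex H t d (j + 1)) := by
    simp only [insert_subset_iff, singleton_subset_iff, mem_bipartiteAbove, P, r, mem_filter,
      mem_product, mem_univ, mem_range, true_and, and_true, h₁, h₂, Sym2.eq_swap]
    exact ⟨⟨by omega, hS _ (Sym2.mem_mk_left _ _), hS _ (Sym2.mem_mk_right _ _)⟩,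
      by omega, hS _ (Sym2.mem_mk_right _ _), hS _ (Sym2.mem_mk_left _ _)⟩
  calc 2 = #({(d, j), (d.symm, 2 * t - j)} : Finset (H.Dart × ℕ)) :=
        (card_pair fun h => d.symm_ne (congrArg Prod.fst h).symm).symm
    _ ≤ _ := card_le_card hmem

lemma sum_card_filter_range_pathVertex :
    ∑ d, #{j ∈ range t | pathVertex H t d (j + 1) ∈ S} = #S.toRight := by
  have hright : S.toRight = univ.filter (fun p => .inr p ∈ S) := by ext; simp
  rw [hright, card_filter, Fintype.sum_prod_type]
  refine sum_congr rfl fun d _ => ?_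
  rw [card_filter,
    ← Fin.sum_univ_eq_sum_range (fun j => if pathVertex H t d (j + 1) ∈ S then 1 else 0)]
  simp only [pathVertex_succ]

def fullDarts : Finset H.Dart := {d | ∀ j ≤ 2 * t + 1, pathVertex H t d j ∈ S}

lemma mul_card_fullDarts_le : t * #(fullDarts S) ≤ #S.toRight := by
  calc t * #(fullDarts S) = #(fullDarts S ×ˢ univ) := by simp [mul_comm]
    _ ≤ #S.toRight := card_le_card fun ⟨d, i⟩ h => by
      simp only [fullDarts, mem_product, mem_filter, mem_univ, true_and, and_true] at h
      simpa using h (i + 1) (by omega)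

lemma card_fullDarts_le {k : ℕ} (hdeg : ∀ v, H.degree v ≤ k) :
    #(fullDarts S) ≤ k * #S.toLeft := by
  refine card_le_mul_card_image_of_maps_to (f := fun d : H.Dart => d.fst) (fun d hd => ?_) k
    fun v _ => ?_
  · simpa using (mem_filter.1 hd).2 0 (by omega)
  · calc #{d ∈ fullDarts S | d.fst = v} ≤ #{d : H.Dart | d.fst = v} :=
          card_le_card (filter_subset_filter _ (subset_univ _))
      _ = H.degree v := H.dart_fst_fiber_card_eq_degree v
      _ ≤ k := hdeg v

theorem two_mul_card_induced_edges_le :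
    2 * #{e ∈ (Subdiv H t).edgeFinset | ∀ v ∈ e, v ∈ S} ≤
      2 * #S.toRight + #(fullDarts S) := by
  let b : H.Dart → ℕ := fun d => #{j ∈ range t | pathVertex H t d (j + 1) ∈ S}
  calc 2 * #{e ∈ (Subdiv H t).edgeFinset | ∀ v ∈ e, v ∈ S}
      ≤ ∑ d, #{j ∈ range (2 * t + 1) |
          pathVertex H t d j ∈ S ∧ pathVertex H t d (j + 1) ∈ S} :=
        two_mul_card_induced_edges_le_sum S
    _ ≤ ∑ d, (#{j ∈ range (2 * t) | pathVertex H t d (j + 1) ∈ S} +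
          if ∀ j ≤ 2 * t + 1, pathVertex H t d j ∈ S then 1 else 0) :=
        sum_le_sum fun d _ => card_filter_range_and_succ_le (fun j => pathVertex H t d j ∈ S) _
    _ = ∑ d, b d + ∑ d : H.Dart, b d.symm + #(fullDarts S) := by
        rw [fullDarts, card_filter]
        simp only [card_filter_range_two_mul_pathVertex, sum_add_distrib, b]
    _ = 2 * #S.toRight + #(fullDarts S) := by
        rw [Fintype.sum_equiv (Function.Involutive.toPerm _ SimpleGraph.Dart.symm_involutive)
            (fun d => b d.symm) b fun _ => rfl,
          ← two_mul, sum_card_filter_range_pathVertex]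

end Subdiv

theorem subdiv_balanced_general {V : Type*} [Fintype V] [DecidableEq V]
    (H : SimpleGraph V) [DecidableRel H.Adj] (t : ℕ) (hreg : H.IsRegularOfDegree 3) :
    ∀ S : Finset (V ⊕ (H.Dart × Fin t)),
      2 * (((Subdiv H t).edgeFinset.filter (fun e => ∀ v ∈ e, v ∈ S)).card : ℚ)
        ≤ (2 + 1 / (3 * t + 1)) * S.card := by
  intro S
  set edges := ((Subdiv H t).edgeFinset.filter (fun e => ∀ v ∈ e, v ∈ S)).card
  have hE := Subdiv.two_mul_card_induced_edges_le S
  have hb := Subdiv.mul_card_fullDarts_le S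
  have ha := Subdiv.card_fullDarts_le S fun v => (hreg v).le
  have key : (3 * t + 1) * (2 * edges) ≤ (6 * t + 3) * S.card := by
    rw [← S.card_toLeft_add_card_toRight]
    nlinarith [Nat.mul_le_mul_left (3 * t + 1) hE, Nat.mul_le_mul_left (2 * t + 1) ha]
  have hkey : (3 * t + 1 : ℚ) * (2 * edges) ≤ (6 * t + 3) * S.card := by exact_mod_cast key
  rw [show (2 + 1 / (3 * t + 1) : ℚ) = (6 * t + 3) / (3 * t + 1) by field_simp; ring,
    div_mul_eq_mul_div, le_div_iff₀ (by positivity)]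
  linarith

/-- The `2t`-subdivision of a 3-regular graph on `2n` vertices is balanced: every
induced subgraph has average degree at most `2 + 1/(3t+1)`. -/
theorem subdiv_balanced {V : Type*} [Fintype V] [DecidableEq V]
    (H : SimpleGraph V) [DecidableRel H.Adj] (n t : ℕ) (hn : 0 < n) (ht : 0 < t)
    (hcard : Fintype.card V = 2 * n) (hreg : H.IsRegularOfDegree 3) :
    ∀ S : Finset (V ⊕ (H.Dart × Fin t)),
      2 * (((Subdiv H t).edgeFinset.filter (fun e => ∀ v ∈ e, v ∈ S)).card : ℚ)
        ≤ (2 + 1 / (3 * t + 1)) * S.card :=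
  subdiv_balanced_general H t hreg
end

section
/- Let G be a graph obtained from a graph G' by adding edges so that a vertex set K of size k becomes a clique. Then the number of maximal cliques of G is at most one plus the number of nonempty cliques of G'. -/
open scoped Classical
open Finset

/-- Let `G` be obtained from `G'` by turning a vertex set `K` of size `k` into a
clique. Then the number of maximal cliques of `G` is at most one plus the number
of nonempty cliques of `G'`. -/
theorem maximal_cliques_le {V : Type*} [Fintype V] [DecidableEq V]
    (G' : SimpleGraph V) (K : Finset V) (k : ℕ) (hK : K.card = k) :
    letI G : SimpleGraph V := G' ⊔ SimpleGraph.fromRel (fun u v => u ∈ K ∧ v ∈ K)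
    ((Finset.univ : Finset (Finset V)).filter (fun C =>
        G.IsClique (C : Set V) ∧
        ∀ D : Finset V, G.IsClique (D : Set V) → C ⊆ D → C = D)).card
      ≤ 1 + ((Finset.univ : Finset (Finset V)).filter (fun C =>
        C.Nonempty ∧ G'.IsClique (C : Set V))).card := by
  set G : SimpleGraph V := G' ⊔ SimpleGraph.fromRel (fun u v => u ∈ K ∧ v ∈ K) with hG
  set U : Finset (Set V) := (do
    let a ← (Finset.univ : Finset (Finset V)); pure (↑a : Set V)) with hU
  have hUmem : ∀ x : Set V, x ∈ U ↔ ∃ a : Finset V, ↑a = x := by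
    intro x
    simp [hU, Finset.bind_def, Finset.pure_def, Finset.mem_sup]
  set S : Finset (Set V) := U.filter (fun C =>
      G.IsClique C ∧ ∀ D : Finset V, G.IsClique (D : Set V) → C ⊆ ↑D → C = ↑D) with hS
  set T : Finset (Set V) := U.filter (fun C => C.Nonempty ∧ G'.IsClique C) with hT
  show S.card ≤ 1 + T.card
  -- key determination lemma
  have key : ∀ C : Set V, (∃ a : Finset V, ↑a = C) → G.IsClique C →
      (∀ D : Finset V, G.IsClique (D : Set V) → C ⊆ ↑D → C = ↑D) →
      C = (C \ ↑K) ∪ {x | x ∈ K ∧ ∀ y ∈ C \ (↑K : Set V), G.Adj x y} := by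
    rintro C ⟨C₀, rfl⟩ hC hmax
    apply Set.Subset.antisymm
    · intro x hx
      by_cases hxK : x ∈ K
      · refine Or.inr ⟨hxK, ?_⟩
        intro y hy
        exact hC hx hy.1 (by rintro rfl; exact hy.2 hxK)
      · exact Or.inl ⟨hx, hxK⟩
    · rintro x (h | h)
      · exact h.1
      · have hclique : G.IsClique ((insert x C₀ : Finset V) : Set V) := by
          rw [Finset.coe_insert]
          refine hC.insert ?_
          intro b hb hbx
          by_cases hbK : b ∈ K
          · exact Or.inr ((SimpleGraph.fromRel_adj _ _ _).mpr
              ⟨hbx, Or.inl ⟨h.1, hbK⟩⟩)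
          · exact h.2 b ⟨hb, hbK⟩
        have heq := hmax (insert x C₀) hclique
          (by rw [Finset.coe_insert]; exact Set.subset_insert _ _)
        rw [heq, Finset.coe_insert]
        exact Set.mem_insert _ _
  have hinj : Set.InjOn (fun C : Set V => C \ ↑K) (S : Set (Set V)) := by
    intro C hC D hD h
    simp only [hS, coe_filter, Set.mem_setOf_eq] at hC hD
    simp only at h
    have h1 := key C ((hUmem C).mp hC.1) hC.2.1 hC.2.2
    have h2 := key D ((hUmem D).mp hD.1) hD.2.1 hD.2.2
    rw [h1, h2, h]
  have hmaps : ∀ C ∈ S, C \ ↑K ∈ insert (∅ : Set V) T := by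
    intro C hC
    simp only [hS, mem_filter] at hC
    obtain ⟨C₀, rfl⟩ := (hUmem C).mp hC.1
    rcases eq_or_ne ((C₀ : Set V) \ ↑K) ∅ with he | he
    · rw [he]; exact mem_insert_self _ _
    · refine mem_insert_of_mem (mem_filter.mpr ⟨?_, ?_, ?_⟩)
      · exact (hUmem _).mpr ⟨C₀ \ K, by rw [Finset.coe_sdiff]⟩
      · exact Set.nonempty_iff_ne_empty.mpr he
      · intro u hu v hv huv
        have hadj : G.Adj u v := hC.2.1 hu.1 hv.1 huv
        rcases hadj with h' | h'
        · exact h'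
        · rw [SimpleGraph.fromRel_adj] at h'
          rcases h'.2 with ⟨h1, _⟩ | ⟨_, h1⟩
          · exact absurd h1 hu.2
          · exact absurd h1 hu.2
  calc S.card ≤ (insert (∅ : Set V) T).card :=
        Finset.card_le_card_of_injOn _ hmaps hinj
    _ ≤ 1 + T.card := by rw [Nat.add_comm]; exact card_insert_le _ _
end

section
/- If a graph G contains an independent set S of size k, then every symmetric n×n real matrix M with M_{ij} = 1 for all non-adjacent pairs (i,j) (including i = j) has largest eigenvalue at least k. -/
/-!
If all eigenvalues of a Hermitian matrix `M` are at most `c`, then `c • 1 - M` is positive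
semidefinite, so `xᴴ M x ≤ c ‖x‖²` for every vector `x`. For the indicator vector of `S` the
left side is `|S|²`, since `M` is identically `1` on `S × S`, while `‖x‖² = |S|`.
-/

open scoped Matrix ComplexOrder

namespace Matrix

theorem indicator_dotProduct_mulVec_indicator {n R : Type*} [Fintype n]
    [NonAssocSemiring R] (M : Matrix n n R) (S : Finset n) :
    (S : Set n).indicator 1 ⬝ᵥ (M *ᵥ (S : Set n).indicator 1) = ∑ i ∈ S, ∑ j ∈ S, M i j := by
  classical
  simp [dotProduct, mulVec, Set.indicator_apply, Finset.sum_ite_mem]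

theorem indicator_dotProduct_indicator {n R : Type*} [Fintype n]
    [NonAssocSemiring R] (S : Finset n) :
    (S : Set n).indicator (1 : n → R) ⬝ᵥ (S : Set n).indicator 1 = S.card := by
  classical
  simp [dotProduct, Set.indicator_apply, Finset.sum_ite_mem]

namespace IsHermitian

section RCLike

variable {𝕜 n : Type*} [RCLike 𝕜] [Fintype n] [DecidableEq n] {A : Matrix n n 𝕜}

theorem posSemidef_smul_one_sub (hA : A.IsHermitian) {c : ℝ} (hc : ∀ i, hA.eigenvalues i ≤ c) :
    (c • 1 - A).PosSemidef := by
  have hdiag : c • 1 - A = Unitary.conjStarAlgAut 𝕜 _ hA.eigenvectorUnitary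
      (diagonal (RCLike.ofReal ∘ fun i => c - hA.eigenvalues i)) := by
    conv_lhs => rw [hA.spectral_theorem, RCLike.real_smul_eq_coe_smul (K := 𝕜)]
    rw [← map_one (Unitary.conjStarAlgAut 𝕜 _ hA.eigenvectorUnitary), ← map_smul, ← map_sub]
    congr 1
    ext i j
    by_cases h : i = j <;> simp [h, Algebra.algebraMap_eq_smul_one, sub_smul]
  rw [hdiag, Unitary.conjStarAlgAut_apply, star_eq_conjTranspose]
  exact (posSemidef_diagonal_iff.mpr fun i => by simpa using hc i).mul_mul_conjTranspose_same _

theorem dotProduct_mulVec_le (hA : A.IsHermitian) {c : ℝ} (hc : ∀ i, hA.eigenvalues i ≤ c)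
    (x : n → 𝕜) : star x ⬝ᵥ (A *ᵥ x) ≤ c * (star x ⬝ᵥ x) := by
  have := (hA.posSemidef_smul_one_sub hc).dotProduct_mulVec_nonneg x
  rw [sub_mulVec, dotProduct_sub, smul_mulVec, one_mulVec, dotProduct_smul,
    RCLike.real_smul_eq_coe_mul] at this
  exact sub_nonneg.mp this

end RCLike

theorem card_le_of_eigenvalues_le_of_block_eq_one {n : Type*} [Fintype n] [DecidableEq n]
    {A : Matrix n n ℝ} (hA : A.IsHermitian) {c : ℝ}
    (hc : ∀ i, hA.eigenvalues i ≤ c) {S : Finset n} (hS : S.Nonempty)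
    (hAS : ∀ i ∈ S, ∀ j ∈ S, A i j = 1) : (S.card : ℝ) ≤ c := by
  have hquad := hA.dotProduct_mulVec_le hc ((S : Set n).indicator 1)
  rw [star_trivial, indicator_dotProduct_mulVec_indicator, indicator_dotProduct_indicator,
    Finset.sum_congr rfl fun i hi => Finset.sum_congr rfl (hAS i hi)] at hquad
  simp only [Finset.sum_const, nsmul_eq_mul, mul_one, RCLike.ofReal_real_eq_id, id] at hquad
  have hpos : (0 : ℝ) < S.card := by exact_mod_cast hS.card_pos
  exact le_of_mul_le_mul_right hquad hpos

end IsHermitian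

end Matrix

/-- If a graph `G` on `n` vertices contains an independent set `S` of size `k`,
then every symmetric real `n × n` matrix `M` with `M i j = 1` for all
non-adjacent pairs (including the diagonal) has largest eigenvalue at least `k`. -/
theorem eigenvalue_ge_of_indepSet {n k : ℕ} (hn : 0 < n) (G : SimpleGraph (Fin n))
    (S : Finset (Fin n)) (hindep : ∀ u ∈ S, ∀ v ∈ S, ¬ G.Adj u v) (hcard : S.card = k)
    (M : Matrix (Fin n) (Fin n) ℝ) (hsym : M.IsHermitian)
    (hM : ∀ i j, ¬ G.Adj i j → M i j = 1) :
    ∃ i : Fin n, (k : ℝ) ≤ hsym.eigenvalues i := by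
  have : Nonempty (Fin n) := ⟨⟨0, hn⟩⟩
  obtain ⟨i₀, hi₀⟩ := Finite.exists_max hsym.eigenvalues
  refine ⟨i₀, ?_⟩
  subst hcard
  rcases S.eq_empty_or_nonempty with rfl | hS
  · have hone := hsym.card_le_of_eigenvalues_le_of_block_eq_one hi₀ (Finset.singleton_nonempty i₀)
      (by simpa using hM i₀ i₀ (G.loopless.irrefl i₀))
    simp only [Finset.card_singleton, Nat.cast_one] at hone
    simp only [Finset.card_empty, Nat.cast_zero]
    linarith
  · exact hsym.card_le_of_eigenvalues_le_of_block_eq_one hi₀ hS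
      fun i hi j hj => hM i j (hindep i hi j hj)
end

section
/- In the setting of the second-moment lemma, E[X_H(G)] → ∞ as n → ∞ whenever p = n^{δ−1}, m = n^ρ, 2 < α < min(2/(1−δ),3), and 0 < ρ < min((1−δ)/2, (2−α(1−δ))/4); indeed E[X_H(G)] ≥ (1−ε) n^{mρ}. -/
open scoped Classical
open Finset

noncomputable section

/-- An edge configuration on `n` vertices: a boolean for each unordered pair. -/
abbrev EdgeConfig (n : ℕ) := Sym2 (Fin n) → Bool

/-- The simple graph determined by an edge configuration. -/
def toGraph {n : ℕ} (g : EdgeConfig n) : SimpleGraph (Fin n) :=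
  SimpleGraph.fromRel (fun u v => g s(u, v) = true)

/-- The `G(n,p)` probability weight of a single edge configuration. -/
def gnpWeight (n : ℕ) (p : ℝ) (g : EdgeConfig n) : ℝ :=
  ∏ e ∈ Finset.univ.filter (fun e : Sym2 (Fin n) => ¬ e.IsDiag),
    (if g e then p else 1 - p)

/-- The probability of an event under the Erdős–Rényi model `G(n,p)`. -/
def gnpProb (n : ℕ) (p : ℝ) (A : Set (EdgeConfig n)) : ℝ :=
  ∑ g : EdgeConfig n, if g ∈ A then gnpWeight n p g else 0

/-- The graph obtained from configuration `g` by turning the vertex set `K` into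
a clique (the planted clique model). -/
def plantClique {n : ℕ} (g : EdgeConfig n) (K : Finset (Fin n)) : SimpleGraph (Fin n) :=
  SimpleGraph.fromRel (fun u v => g s(u, v) = true ∨ (u ∈ K ∧ v ∈ K))

end

noncomputable section

/-- `f : Fin m → Fin n` obeys the partition of `[n]` into `m` consecutive parts of
size `n/m` if `f i` lies in the `i`-th part for every `i`. -/
def PartRespecting (n m : ℕ) (f : Fin m → Fin n) : Prop :=
  ∀ i : Fin m, (f i).val / (n / m) = i.val

/-- The number of partition-respecting induced copies of `H` in `G`. -/
def copyCount (n m : ℕ) (H : SimpleGraph (Fin m)) (G : SimpleGraph (Fin n)) : ℕ :=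
  ((Finset.univ : Finset (Fin m → Fin n)).filter (fun f =>
    PartRespecting n m f ∧
      ∀ i j : Fin m, i ≠ j → (G.Adj (f i) (f j) ↔ H.Adj i j))).card

/-- The expected number of partition-respecting induced copies of `H` under `G(n,p)`. -/
def expCopies (n m : ℕ) (p : ℝ) (H : SimpleGraph (Fin m)) : ℝ :=
  ∑ g : EdgeConfig n, gnpWeight n p g * (copyCount n m H (toGraph g) : ℝ)

/-! Bound the expectation below term by term. Every partition-respecting map `f` is injective, so
the event that `f` spans an induced copy of `H` prescribes the status of `C(m,2)` distinct pairs of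
`[n]` and has probability at least `p^e (1-p)^(C(m,2)-e)`, `e = αm/2`; there are `(n/m)^m` such maps.
As `n/m = n^(1-ρ)`, `(n/m)^m p^e = n^(m(1-ρ) - (1-δ)αm/2) ≥ n^(mρ)` because
`ρ ≤ (2-α(1-δ))/4`, and Bernoulli's inequality gives `(1-p)^(C(m,2)) ≥ 1 - m²p = 1 - n^(2ρ+δ-1)`,
which exceeds `1 - ε` for large `n` because `ρ < (1-δ)/2`. -/

theorem Fintype.sum_ite_forall_eq_prod {ι R : Type*} [Fintype ι] [DecidableEq ι] [CommSemiring R]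
    (S : Finset ι) (t : ι → Bool) (W : ι → Bool → R) :
    ∑ g : ι → Bool, (if ∀ e ∈ S, g e = t e then ∏ e, W e (g e) else 0) =
      (∏ e ∈ S, W e (t e)) * ∏ e ∈ Sᶜ, (W e true + W e false) := by
  set V : ι → Bool → R := fun e b => if e ∈ S ∧ b ≠ t e then 0 else W e b
  have hV : ∀ g : ι → Bool,
      (if ∀ e ∈ S, g e = t e then ∏ e, W e (g e) else 0) = ∏ e, V e (g e) := by
    intro g
    split_ifs with hg
    · refine Finset.prod_congr rfl fun e _ => ?_
      exact (if_neg fun h => h.2 (hg e h.1)).symm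
    · push Not at hg
      obtain ⟨e, he, hne⟩ := hg
      exact (prod_eq_zero (mem_univ e) (by simp [V, he, hne])).symm
  have hsum : ∀ e, ∑ b, V e b = if e ∈ S then W e (t e) else W e true + W e false := by
    intro e
    by_cases he : e ∈ S <;> cases h : t e <;> simp [V, he, h]
  simp_rw [hV]
  rw [← Fintype.prod_sum]
  simp_rw [hsum]
  rw [prod_ite, filter_mem_eq_inter, univ_inter, ← compl_filter, filter_mem_eq_inter, univ_inter]

theorem gnpWeight_eq_prod (n : ℕ) (p : ℝ) (g : EdgeConfig n) :
    gnpWeight n p g = ∏ e, if e.IsDiag then 1 else if g e then p else 1 - p := by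
  simp only [gnpWeight, prod_filter, ite_not]

-- The diagonal coordinates of an `EdgeConfig` carry weight `1`, so each of them doubles
-- `gnpProb` of an event that ignores it; hence only an inequality.
theorem prod_le_gnpProb_cylinder {n : ℕ} {p : ℝ} (hp0 : 0 ≤ p) (hp1 : p ≤ 1)
    (S : Finset (Sym2 (Fin n))) (hS : ∀ e ∈ S, ¬ e.IsDiag) (t : Sym2 (Fin n) → Bool) :
    ∏ e ∈ S, (if t e then p else 1 - p) ≤ gnpProb n p {g | ∀ e ∈ S, g e = t e} := by
  set W : Sym2 (Fin n) → Bool → ℝ := fun e b => if e.IsDiag then 1 else if b then p else 1 - p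
  have hmarg : ∀ e, 1 ≤ W e true + W e false := fun e => by
    by_cases he : e.IsDiag <;> simp [W, he]
  calc ∏ e ∈ S, (if t e then p else 1 - p) = ∏ e ∈ S, W e (t e) :=
        prod_congr rfl fun e he => by simp [W, hS e he]
    _ ≤ (∏ e ∈ S, W e (t e)) * ∏ e ∈ Sᶜ, (W e true + W e false) :=
        le_mul_of_one_le_right (prod_nonneg fun e _ => by unfold W; split_ifs <;> linarith)
          (one_le_prod fun e _ => hmarg e)
    _ = gnpProb n p {g | ∀ e ∈ S, g e = t e} := by
        rw [← Fintype.sum_ite_forall_eq_prod, gnpProb]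
        simp only [Set.mem_ofPred_eq, gnpWeight_eq_prod, W]

def IsInducedCopy {V W : Type*} (H : SimpleGraph V) (G : SimpleGraph W) (f : V → W) : Prop :=
  ∀ i j : V, i ≠ j → (G.Adj (f i) (f j) ↔ H.Adj i j)

theorem toGraph_adj {n : ℕ} (g : EdgeConfig n) (u v : Fin n) :
    (toGraph g).Adj u v ↔ u ≠ v ∧ g s(u, v) = true := by
  simp [toGraph, SimpleGraph.fromRel_adj, Sym2.eq_swap]

theorem isInducedCopy_toGraph_iff {n m : ℕ} {f : Fin m → Fin n} (hf : Function.Injective f)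
    (H : SimpleGraph (Fin m)) (g : EdgeConfig n) :
    IsInducedCopy H (toGraph g) f ↔
      ∀ a : Sym2 (Fin m), ¬ a.IsDiag → g (Sym2.map f a) = decide (a ∈ H.edgeSet) := by
  constructor
  · intro h a
    induction a using Sym2.ind with | _ i j => ?_
    intro hij
    rw [Sym2.mk_isDiag_iff] at hij
    refine Bool.eq_iff_iff.mpr ?_
    simpa [toGraph_adj, hf.eq_iff, hij] using h i j hij
  · intro h i j hij
    have := Bool.eq_iff_iff.mp (h s(i, j) (by simpa using hij))
    simpa [toGraph_adj, hf.eq_iff, hij] using this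

theorem prod_not_isDiag_ite_mem_edgeSet {V R : Type*} [Fintype V] [DecidableEq V] [CommRing R]
    (H : SimpleGraph V) (p : R) :
    ∏ a ∈ univ.filter (fun a : Sym2 V => ¬ a.IsDiag), (if a ∈ H.edgeSet then p else 1 - p) =
      p ^ #H.edgeFinset * (1 - p) ^ ((Fintype.card V).choose 2 - #H.edgeFinset) := by
  have hedges : (univ.filter fun a : Sym2 V => ¬ a.IsDiag).filter (· ∈ H.edgeSet) =
      H.edgeFinset := by
    ext a
    simp only [mem_filter, mem_univ, true_and, SimpleGraph.mem_edgeFinset, and_iff_right_iff_imp]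
    exact H.not_isDiag_of_mem_edgeSet
  have hcard : #(univ.filter fun a : Sym2 V => ¬ a.IsDiag) = (Fintype.card V).choose 2 := by
    rw [← Fintype.card_subtype, Sym2.card_subtype_not_diag]
  rw [prod_ite, prod_const, prod_const, hedges, filter_not,
    card_sdiff_of_subset (filter_subset _ _), hedges, hcard]

theorem pow_mul_pow_le_gnpProb_isInducedCopy {n m : ℕ} {p : ℝ} (hp0 : 0 ≤ p) (hp1 : p ≤ 1)
    (H : SimpleGraph (Fin m)) {f : Fin m → Fin n} (hf : Function.Injective f) :
    p ^ #H.edgeFinset * (1 - p) ^ (m.choose 2 - #H.edgeFinset) ≤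
      gnpProb n p {g | IsInducedCopy H (toGraph g) f} := by
  have hmap : Function.Injective (Sym2.map f) := Sym2.map.injective hf
  set S := (univ.filter fun a : Sym2 (Fin m) => ¬ a.IsDiag).image (Sym2.map f)
  set t := Function.extend (Sym2.map f) (fun a => decide (a ∈ H.edgeSet)) fun _ => false
  have hS : ∀ e ∈ S, ¬ e.IsDiag := by simp [S, Sym2.isDiag_map hf]
  have hevent : {g | IsInducedCopy H (toGraph g) f} = {g | ∀ e ∈ S, g e = t e} := by
    ext g
    simp [isInducedCopy_toGraph_iff hf, S, t, hmap.extend_apply]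
  have hprod := prod_not_isDiag_ite_mem_edgeSet H p
  rw [Fintype.card_fin] at hprod
  calc p ^ #H.edgeFinset * (1 - p) ^ (m.choose 2 - #H.edgeFinset)
      = ∏ e ∈ S, (if t e then p else 1 - p) := by
        rw [← hprod, prod_image hmap.injOn]
        exact prod_congr rfl fun a _ => by simp [t, hmap.extend_apply]
    _ ≤ _ := hevent ▸ prod_le_gnpProb_cylinder hp0 hp1 S hS t

theorem PartRespecting.injective {n m : ℕ} {f : Fin m → Fin n} (hf : PartRespecting n m f) :
    Function.Injective f := fun i j h => Fin.ext <| (hf i).symm.trans (h ▸ hf j)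

theorem card_filter_partRespecting {n m : ℕ} (hmn : m ∣ n) (hm : 0 < m) :
    #(univ.filter (PartRespecting n m)) = (n / m) ^ m := by
  obtain ⟨q, rfl⟩ := hmn
  rw [Nat.mul_div_cancel_left q hm]
  have hfilter : univ.filter (PartRespecting (m * q) m) =
      univ.image fun h : Fin m → Fin q => fun i => finProdFinEquiv (i, h i) := by
    ext f
    simp only [mem_filter, mem_univ, true_and, mem_image, PartRespecting,
      Nat.mul_div_cancel_left q hm]
    constructor
    · intro hf
      refine ⟨fun i => (f i).modNat, funext fun i => Fin.ext ?_⟩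
      simp [Fin.coe_modNat, ← hf i, Nat.mod_add_div]
    · rintro ⟨h, rfl⟩ i
      have hq : 0 < q := Fin.pos (h i)
      simp [Nat.add_mul_div_left _ _ hq, Nat.div_eq_of_lt (h i).2]
  have hinj : Function.Injective fun h : Fin m → Fin q => fun i => finProdFinEquiv (i, h i) :=
    fun h h' hh => funext fun i => by simpa using congrFun hh i
  rw [hfilter, card_image_of_injective _ hinj, card_univ, Fintype.card_fun, Fintype.card_fin,
    Fintype.card_fin]

theorem expCopies_eq_sum_gnpProb (n m : ℕ) (p : ℝ) (H : SimpleGraph (Fin m)) :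
    expCopies n m p H = ∑ f ∈ univ.filter (PartRespecting n m),
      gnpProb n p {g | IsInducedCopy H (toGraph g) f} := by
  simp only [expCopies, copyCount, gnpProb, card_filter, Nat.cast_sum, mul_sum, sum_filter]
  rw [sum_comm]
  refine sum_congr rfl fun f _ => ?_
  split_ifs with hf
  · exact sum_congr rfl fun g _ => by simp [hf, IsInducedCopy]; congr
  · simp [hf]

theorem natDiv_pow_mul_le_expCopies {n m : ℕ} {p : ℝ} (hp0 : 0 ≤ p) (hp1 : p ≤ 1)
    (hmn : m ∣ n) (hm : 0 < m) (H : SimpleGraph (Fin m)) :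
    ((n / m : ℕ) : ℝ) ^ m * (p ^ #H.edgeFinset * (1 - p) ^ (m.choose 2 - #H.edgeFinset)) ≤
      expCopies n m p H := by
  have hsum := card_nsmul_le_sum (univ.filter (PartRespecting n m)) _ _ fun f hf =>
    pow_mul_pow_le_gnpProb_isInducedCopy hp0 hp1 H (mem_filter.mp hf).2.injective
  rw [card_filter_partRespecting hmn hm, nsmul_eq_mul, ← expCopies_eq_sum_gnpProb] at hsum
  exact_mod_cast hsum

theorem one_sub_le_one_sub_pow {p ε : ℝ} {k : ℕ} (hp1 : p ≤ 1) (hk : k * p ≤ ε) :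
    1 - ε ≤ (1 - p) ^ k := by
  have := one_add_mul_sub_le_pow (a := 1 - p) (by linarith) k
  linarith

theorem rpow_mul_le_natDiv_pow_mul_rpow_pow {n m E : ℕ} {α δ ρ : ℝ} (hn : 1 ≤ (n : ℝ))
    (hm : (m : ℝ) = (n : ℝ) ^ ρ) (hmn : m ∣ n) (hE : 2 * (E : ℝ) = α * m)
    (hρ : ρ ≤ (2 - α * (1 - δ)) / 4) :
    (n : ℝ) ^ ((m : ℝ) * ρ) ≤ ((n / m : ℕ) : ℝ) ^ m * ((n : ℝ) ^ (δ - 1)) ^ E := by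
  have hn0 : (0 : ℝ) < n := by linarith
  have hm0 : (m : ℝ) ≠ 0 := hm ▸ (Real.rpow_pos_of_pos hn0 ρ).ne'
  have hq : ((n / m : ℕ) : ℝ) = (n : ℝ) ^ (1 - ρ) := by
    rw [Nat.cast_div hmn hm0, hm, Real.rpow_sub hn0, Real.rpow_one]
  have hexp : (m : ℝ) * ρ ≤ (1 - ρ) * m + (δ - 1) * E := by
    have hEδ : (δ - 1) * E = (δ - 1) * α * m / 2 := by linear_combination (δ - 1) / 2 * hE
    nlinarith [mul_le_mul_of_nonneg_left hρ (Nat.cast_nonneg m : (0 : ℝ) ≤ m)]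
  calc (n : ℝ) ^ ((m : ℝ) * ρ) ≤ (n : ℝ) ^ ((1 - ρ) * m + (δ - 1) * E) :=
        Real.rpow_le_rpow_of_exponent_le hn hexp
    _ = ((n / m : ℕ) : ℝ) ^ m * ((n : ℝ) ^ (δ - 1)) ^ E := by
        rw [hq, ← Real.rpow_natCast, ← Real.rpow_natCast, ← Real.rpow_mul hn0.le,
          ← Real.rpow_mul hn0.le, ← Real.rpow_add hn0]

theorem eventually_natCast_rpow_lt {s ε : ℝ} (hs : s < 0) (hε : 0 < ε) :
    ∀ᶠ n : ℕ in Filter.atTop, (n : ℝ) ^ s < ε := by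
  have h := (tendsto_rpow_neg_atTop (neg_pos.mpr hs)).comp tendsto_natCast_atTop_atTop
  simp only [neg_neg] at h
  exact h.eventually_lt_const hε

theorem expCopies_tendsto_infinity_general (δ ρ α ε : ℝ)
    (hε : ε ∈ Set.Ioo (0:ℝ) (1/7))
    (hρ : 0 < ρ ∧ ρ < min ((1 - δ) / 2) ((2 - α * (1 - δ)) / 4)) :
    ∀ᶠ n : ℕ in Filter.atTop, ∀ m : ℕ, (m : ℝ) = (n : ℝ) ^ ρ → m ∣ n →
      ∀ H : SimpleGraph (Fin m),
        2 * (H.edgeFinset.card : ℝ) = α * m →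
        (∀ s : Finset (Fin m),
          2 * ((H.edgeFinset.filter (fun e => ∀ v ∈ e, v ∈ s)).card : ℝ) ≤ α * s.card) →
        (1 - ε) * (n : ℝ) ^ ((m : ℝ) * ρ) ≤ expCopies n m ((n : ℝ) ^ (δ - 1)) H := by
  have hρδ : ρ < (1 - δ) / 2 := hρ.2.trans_le (min_le_left _ _)
  have hρα : ρ < (2 - α * (1 - δ)) / 4 := hρ.2.trans_le (min_le_right _ _)
  filter_upwards [Filter.eventually_ge_atTop 1,
    eventually_natCast_rpow_lt (by linarith : 2 * ρ + δ - 1 < 0) hε.1]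
    with n hn hsmall m hm hmn H hE _
  set p := (n : ℝ) ^ (δ - 1)
  have hn1 : (1 : ℝ) ≤ n := by exact_mod_cast hn
  have hm0 : 0 < m := by exact_mod_cast hm ▸ Real.rpow_pos_of_pos (by linarith) ρ
  have hp0 : 0 ≤ p := by positivity
  have hp1 : p ≤ 1 := Real.rpow_le_one_of_one_le_of_nonpos hn1 (by linarith)
  have hkp : ((m.choose 2 - #H.edgeFinset : ℕ) : ℝ) * p ≤ ε := calc
    _ ≤ (m : ℝ) ^ 2 * p := by
        gcongr; exact_mod_cast (Nat.sub_le _ _).trans (Nat.choose_le_pow m 2)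
    _ = (n : ℝ) ^ (2 * ρ + δ - 1) := by
        rw [hm, ← Real.rpow_natCast, ← Real.rpow_mul (by linarith), ← Real.rpow_add (by linarith)]
        ring_nf
    _ ≤ ε := hsmall.le
  calc (1 - ε) * (n : ℝ) ^ ((m : ℝ) * ρ)
      ≤ (1 - p) ^ (m.choose 2 - #H.edgeFinset) * (((n / m : ℕ) : ℝ) ^ m * p ^ #H.edgeFinset) :=
        mul_le_mul (one_sub_le_one_sub_pow hp1 hkp)
          (rpow_mul_le_natDiv_pow_mul_rpow_pow hn1 hm hmn hE hρα.le) (by positivity)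
          (pow_nonneg (by linarith) _)
    _ = ((n / m : ℕ) : ℝ) ^ m * (p ^ #H.edgeFinset * (1 - p) ^ (m.choose 2 - #H.edgeFinset)) := by
        ring
    _ ≤ expCopies n m p H := natDiv_pow_mul_le_expCopies hp0 hp1 hmn hm0 H

/-- The expected number of partition-respecting induced copies of a balanced graph
`H` on `m = n^ρ` vertices with average degree `α` in `G(n,p)`, `p = n^{δ-1}`,
satisfies `E[X_H] ≥ (1-ε)·n^{mρ}` (hence it tends to infinity), whenever
`2 < α < min(2/(1-δ), 3)` and `0 < ρ < min((1-δ)/2, (2-α(1-δ))/4)`. -/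
theorem expCopies_tendsto_infinity (δ ρ α ε : ℝ) (hδ : δ ∈ Set.Ioo (0:ℝ) 1)
    (hε : ε ∈ Set.Ioo (0:ℝ) (1/7))
    (hα : 2 < α ∧ α < min (2 / (1 - δ)) 3)
    (hρ : 0 < ρ ∧ ρ < min ((1 - δ) / 2) ((2 - α * (1 - δ)) / 4)) :
    ∀ᶠ n : ℕ in Filter.atTop, ∀ m : ℕ, (m : ℝ) = (n : ℝ) ^ ρ → m ∣ n →
      ∀ H : SimpleGraph (Fin m),
        2 * (H.edgeFinset.card : ℝ) = α * m →
        (∀ s : Finset (Fin m),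
          2 * ((H.edgeFinset.filter (fun e => ∀ v ∈ e, v ∈ s)).card : ℝ) ≤ α * s.card) →
        (1 - ε) * (n : ℝ) ^ ((m : ℝ) * ρ) ≤ expCopies n m ((n : ℝ) ^ (δ - 1)) H :=
  expCopies_tendsto_infinity_general δ ρ α ε hε hρ
end
end
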